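/- Let Γ be a finitely generated nilpotent group and let K be a closed subgroup of the unitary group U(n). Then every representation ρ in the connected component of the trivial homomorphism 𝟙 in the representation space Hom(Γ,K) kills the commutator subgroup: for all ρ ∈ connectedComponent(𝟙), the commutator subgroup [Γ,Γ] is contained in ker ρ. -/

import Mathlib

/-!
Descending induction along the lower central series `γ₁ ⊇ γ₂ ⊇ ⋯ ⊇ γ_c = 1`. Suppose every
representation `σ` in the component of `𝟙` kills `γ_{k+2}`, and let `g = ⁅a, b⁆` with `a ∈ γ_k`.
Then `σ g` commutes with `σ a` and `σ b`, which therefore preserve each eigenspace `E` of `σ g`;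
there `σ g` is both a scalar `μ` and a commutator, so `μ ^ dim E = det (σ g)|_E = 1`. Hence all
eigenvalues of `σ g` are `n!`-th roots of unity and `tr (σ g)` lies in a finite set. As `σ` varies
in the connected component of `𝟙` this trace is continuous, hence constant, equal to `n`; and a
unitary matrix of trace `n` is the identity.
-/

/-- The representation space `Hom(Γ,G)`: group homomorphisms with the topology of pointwise
convergence, i.e. the topology induced from the product space `Γ → G`. -/
instance repSpaceTopology {Γ G : Type*} [Group Γ] [Group G] [TopologicalSpace G] :
    TopologicalSpace (Γ →* G) :=
  TopologicalSpace.induced (fun ρ => (ρ : Γ → G)) Pi.topologicalSpace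

open Module
open scoped commutatorElement Nat Matrix

theorem Group.IsNilpotent.commutator_induction {Γ : Type*} [Group Γ] (hΓ : Group.IsNilpotent Γ)
    {P : Subgroup Γ → Prop} (bot : P ⊥)
    (step : ∀ H : Subgroup Γ, P ⁅⁅H, (⊤ : Subgroup Γ)⁆, (⊤ : Subgroup Γ)⁆ →
      P ⁅H, (⊤ : Subgroup Γ)⁆) :
    P (commutator Γ) := by
  obtain ⟨c, hc⟩ := Subgroup.nilpotent_iff_lowerCentralSeries.mp hΓ
  set γ := (⊤ : Subgroup Γ).lowerCentralSeries
  have hlast : P (γ (c + 1)) := by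
    change P ⁅γ c, ⊤⁆
    rwa [hc, Subgroup.commutator_bot_left]
  have hγ : ∀ m ≤ c, P (γ (m + 1)) := fun _ hm =>
    Nat.decreasingInduction (motive := fun m _ => P (γ (m + 1)))
      (fun k _ ih => step (γ k) ih) hlast hm
  exact hγ 0 (Nat.zero_le c)

namespace Module.End

variable {K V : Type*} [Field K] [AddCommGroup V] [Module K V]

noncomputable def eigenspaceRestrictHom (c : (End K V)ˣ) (μ : K) :
    Subgroup.centralizer {c} →* End K ((c : End K V).eigenspace μ) where
  toFun g := ((g : (End K V)ˣ) : End K V).restrict <| mapsTo_genEigenspace_of_comm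
    (Commute.units_val (Subgroup.mem_centralizer_singleton_iff.mp g.2).symm) μ 1
  map_one' := rfl
  map_mul' _ _ := rfl

theorem eigenspaceRestrictHom_self (c : (End K V)ˣ) (μ : K) :
    eigenspaceRestrictHom c μ ⟨c, Subgroup.mem_centralizer_singleton_iff.mpr rfl⟩ = μ • 1 := by
  ext x
  exact mem_eigenspace_iff.mp x.2

theorem pow_finrank_factorial_eq_one_of_hasEigenvalue_commutatorElement [FiniteDimensional K V]
    {a b : (End K V)ˣ} (ha : Commute ⁅a, b⁆ a) (hb : Commute ⁅a, b⁆ b) {μ : K}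
    (hμ : HasEigenvalue ((⁅a, b⁆ : (End K V)ˣ) : End K V) μ) : μ ^ (finrank K V)! = 1 := by
  set c := ⁅a, b⁆
  let Z := Subgroup.centralizer {c}
  let det : Z →* Kˣ := (Units.map LinearMap.det).comp (eigenspaceRestrictHom c μ).toHomUnits
  let cZ : Z := ⟨c, Subgroup.mem_centralizer_singleton_iff.mpr rfl⟩
  have hcZ : cZ = ⁅(⟨a, Subgroup.mem_centralizer_singleton_iff.mpr ha.symm⟩ : Z),
      ⟨b, Subgroup.mem_centralizer_singleton_iff.mpr hb.symm⟩⁆ := rfl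
  have hdet_one : det cZ = 1 := by
    rw [hcZ, map_commutatorElement, commutatorElement_eq_one_iff_commute]
    exact Commute.all _ _
  have hdet_pow : (det cZ : K) = μ ^ finrank K ((c : End K V).eigenspace μ) := by
    simp [det, cZ, eigenspaceRestrictHom_self c μ, LinearMap.det_smul]
  have hpos : 0 < finrank K ((c : End K V).eigenspace μ) :=
    finrank_pos_iff.mpr (Submodule.nontrivial_iff_ne_bot.mpr hμ)
  obtain ⟨k, hk⟩ := Nat.dvd_factorial hpos (Submodule.finrank_le _)
  rw [hk, pow_mul, ← hdet_pow, hdet_one, Units.val_one, one_pow]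

theorem trace_mem_image_sum_sym [IsAlgClosed K] [FiniteDimensional K V] [DecidableEq K]
    (f : End K V) {S : Finset K} (hS : ∀ μ, f.HasEigenvalue μ → μ ∈ S) :
    LinearMap.trace K V f ∈
      (S.sym (finrank K V)).image fun s : Sym K (finrank K V) => (s : Multiset K).sum := by
  have hcard : Multiset.card f.charpoly.roots = finrank K V := by
    rw [Polynomial.splits_iff_card_roots.mp (IsAlgClosed.splits _), LinearMap.charpoly_natDegree]
  refine Finset.mem_image.mpr
    ⟨⟨f.charpoly.roots, hcard⟩, Finset.mem_sym_iff.mpr fun μ hμ => ?_, ?_⟩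
  · exact hS μ ((hasEigenvalue_iff_isRoot_charpoly f μ).mpr (Polynomial.isRoot_of_mem_roots hμ))
  · exact (trace_eq_sum_roots_charpoly_of_splits (IsAlgClosed.splits _)).symm

end Module.End

open scoped ComplexOrder in
theorem Matrix.eq_one_of_mem_unitaryGroup_of_trace_eq_card {m 𝕜 : Type*} [Fintype m]
    [DecidableEq m] [RCLike 𝕜] {U : Matrix m m 𝕜} (hU : U ∈ Matrix.unitaryGroup m 𝕜)
    (htr : U.trace = Fintype.card m) : U = 1 := by
  have hsq : (U - 1)ᴴ * (U - 1) = (1 - U) + (1 - Uᴴ) := by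
    rw [conjTranspose_sub, conjTranspose_one, sub_mul, mul_sub, mul_sub,
      ← star_eq_conjTranspose, mem_unitaryGroup_iff'.mp hU, one_mul, mul_one, mul_one]
    abel
  rw [← sub_eq_zero, ← trace_conjTranspose_mul_self_eq_zero_iff, hsq, trace_add, trace_sub,
    trace_sub, trace_conjTranspose, htr, trace_one]
  simp

noncomputable def rootOfUnitySums (n : ℕ) : Finset ℂ :=
  ((Polynomial.nthRootsFinset n ! (1 : ℂ)).sym n).image fun s : Sym ℂ n => (s : Multiset ℂ).sum

theorem Matrix.UnitaryGroup.trace_commutatorElement_mem_rootOfUnitySums {n : ℕ}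
    {u v : Matrix.unitaryGroup (Fin n) ℂ} (hu : Commute ⁅u, v⁆ u) (hv : Commute ⁅u, v⁆ v) :
    ((⁅u, v⁆ : Matrix.unitaryGroup (Fin n) ℂ) : Matrix (Fin n) (Fin n) ℂ).trace ∈
      rootOfUnitySums n := by
  let toEnd : Matrix.unitaryGroup (Fin n) ℂ →* (End ℂ (Fin n → ℂ))ˣ :=
    (Units.map Matrix.toLinAlgEquiv'.toMonoidHom).comp Unitary.toUnits
  have htrace : ((⁅u, v⁆ : Matrix.unitaryGroup (Fin n) ℂ) : Matrix (Fin n) (Fin n) ℂ).trace =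
      LinearMap.trace ℂ _ ((⁅toEnd u, toEnd v⁆ : (End ℂ (Fin n → ℂ))ˣ) : End ℂ (Fin n → ℂ)) := by
    rw [← map_commutatorElement]
    exact (Matrix.trace_toLin'_eq _).symm
  have hmem := End.trace_mem_image_sum_sym
    ((⁅toEnd u, toEnd v⁆ : (End ℂ (Fin n → ℂ))ˣ) : End ℂ (Fin n → ℂ))
    (S := Polynomial.nthRootsFinset (finrank ℂ (Fin n → ℂ))! 1)
    fun μ hμ => (Polynomial.mem_nthRootsFinset (Nat.factorial_pos _) 1).mpr <|
      End.pow_finrank_factorial_eq_one_of_hasEigenvalue_commutatorElement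
        (by rw [← map_commutatorElement]; exact hu.map toEnd)
        (by rw [← map_commutatorElement]; exact hv.map toEnd) hμ
  rwa [finrank_fin_fun, ← htrace] at hmem

section RepSpace

variable {Γ G : Type*} [Group Γ] [Group G] [TopologicalSpace G]

theorem continuous_apply_repSpace (g : Γ) : Continuous fun τ : Γ →* G => τ g :=
  (continuous_apply g).comp continuous_induced_dom

theorem MonoidHom.continuous_comp_left {H : Type*} [Group H] [TopologicalSpace H] (f : G →* H)
    (hf : Continuous f) : Continuous fun τ : Γ →* G => f.comp τ :=
  continuous_induced_rng.2 (continuous_pi fun g => hf.comp (continuous_apply_repSpace g))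

end RepSpace

section UnitaryRepSpace

variable {Γ : Type*} [Group Γ] {n : ℕ}

theorem apply_commutatorElement_eq_one_of_mem_connectedComponent (a b : Γ)
    (hcomm : ∀ τ ∈ connectedComponent (1 : Γ →* Matrix.unitaryGroup (Fin n) ℂ),
      Commute (τ ⁅a, b⁆) (τ a) ∧ Commute (τ ⁅a, b⁆) (τ b))
    {σ : Γ →* Matrix.unitaryGroup (Fin n) ℂ} (hσ : σ ∈ connectedComponent 1) :
    σ ⁅a, b⁆ = 1 := by
  let tr : (Γ →* Matrix.unitaryGroup (Fin n) ℂ) → ℂ := fun τ =>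
    (τ ⁅a, b⁆ : Matrix (Fin n) (Fin n) ℂ).trace
  have htr_cont : Continuous tr :=
    (continuous_subtype_val.comp (continuous_apply_repSpace _)).matrix_trace
  have htr_mem : Set.MapsTo tr (connectedComponent 1) (rootOfUnitySums n : Set ℂ) :=
    fun τ hτ => by
      obtain ⟨ha, hb⟩ := hcomm τ hτ
      rw [map_commutatorElement] at ha hb
      simpa only [tr, map_commutatorElement, Finset.mem_coe] using
        Matrix.UnitaryGroup.trace_commutatorElement_mem_rootOfUnitySums ha hb
  have htr : tr σ = tr 1 := isPreconnected_connectedComponent.constant_of_mapsTo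
    (isDiscrete_iff_discreteTopology.mpr inferInstance) htr_cont.continuousOn htr_mem hσ
    mem_connectedComponent
  refine Subtype.ext (Matrix.eq_one_of_mem_unitaryGroup_of_trace_eq_card (σ ⁅a, b⁆).2 ?_)
  simpa [tr] using htr

theorem commutator_le_ker_of_commutator_commutator_le_ker (H : Subgroup Γ)
    (hH : ∀ τ ∈ connectedComponent (1 : Γ →* Matrix.unitaryGroup (Fin n) ℂ),
      ⁅⁅H, (⊤ : Subgroup Γ)⁆, (⊤ : Subgroup Γ)⁆ ≤ τ.ker) :
    ∀ σ ∈ connectedComponent (1 : Γ →* Matrix.unitaryGroup (Fin n) ℂ),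
      ⁅H, (⊤ : Subgroup Γ)⁆ ≤ σ.ker := by
  intro σ hσ
  rw [Subgroup.commutator_le]
  intro a ha b _
  refine apply_commutatorElement_eq_one_of_mem_connectedComponent a b (fun τ hτ => ?_) hσ
  have hcentral : ∀ x, Commute (τ ⁅a, b⁆) (τ x) := fun x => by
    rw [← commutatorElement_eq_one_iff_commute, ← map_commutatorElement]
    exact hH τ hτ (Subgroup.commutator_mem_commutator
      (Subgroup.commutator_mem_commutator ha (Subgroup.mem_top b)) (Subgroup.mem_top x))
  exact ⟨hcentral a, hcentral b⟩

end UnitaryRepSpace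

theorem component_of_trivial_kills_commutator_general
    (n : ℕ) (K : Subgroup (Matrix.unitaryGroup (Fin n) ℂ))
    (Γ : Type*) [Group Γ] (hnil : Group.IsNilpotent Γ) :
    ∀ ρ ∈ connectedComponent (1 : Γ →* ↥K), commutator Γ ≤ ρ.ker := by
  intro ρ hρ
  have hU : ∀ σ ∈ connectedComponent (1 : Γ →* Matrix.unitaryGroup (Fin n) ℂ),
      commutator Γ ≤ σ.ker :=
    hnil.commutator_induction
      (P := fun H => ∀ σ ∈ connectedComponent (1 : Γ →* Matrix.unitaryGroup (Fin n) ℂ),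
        H ≤ σ.ker)
      (fun _ _ => bot_le) commutator_le_ker_of_commutator_commutator_le_ker
  have hρU : K.subtype.comp ρ ∈ connectedComponent 1 :=
    (K.subtype.continuous_comp_left continuous_subtype_val).image_connectedComponent_subset 1
      ⟨ρ, hρ, rfl⟩
  rw [← MonoidHom.ker_comp_of_injective ρ K.subtype K.subtype_injective]
  exact hU _ hρU

/-- Let `Γ` be a finitely generated nilpotent group and `K` a closed subgroup of `U(n)`.
Every representation in the connected component of the trivial homomorphism `𝟙` in
`Hom(Γ,K)` kills the commutator subgroup `[Γ,Γ]`. -/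
theorem component_of_trivial_kills_commutator
    (n : ℕ) (K : Subgroup (Matrix.unitaryGroup (Fin n) ℂ))
    (hK : IsClosed (K : Set (Matrix.unitaryGroup (Fin n) ℂ)))
    (Γ : Type*) [Group Γ] (hfg : Group.FG Γ) (hnil : Group.IsNilpotent Γ) :
    ∀ ρ ∈ connectedComponent (1 : Γ →* ↥K), commutator Γ ≤ ρ.ker :=
  component_of_trivial_kills_commutator_general n K Γ hnil
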